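/- arXiv:2007.09851 — 3 statements merged into one kernel-verified Lean document; each statement's English description precedes it below -/
import Mathlib

section
/- Let A_0, A_1, ..., A_M be exchangeable real-valued random variables. Define pval = (1/(M+1)) * (1 + #{m in {1,...,M} : A_m >= A_0}). Then for every alpha in [0,1], P(pval <= alpha) <= alpha. -/
/-!
Write `R i = #{m | A i ≤ A m}`, so that `(M + 1) * pval = R 0`. For every outcome at most `k`
indices satisfy `R i ≤ k`: they all lie weakly above the smallest of them, whose `R` is at most
`k`. Exchangeability gives all events `{R i ≤ k}` the probability of `{R 0 ≤ k}`, so summing over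
`i` yields `(M + 1) * P(R 0 ≤ k) ≤ k`; take `k = ⌊α (M + 1)⌋`.
-/

open MeasureTheory Finset
open scoped ENNReal

section Rank

variable {ι α : Type*} [Fintype ι] [LinearOrder α]

def rankFromAbove (v : ι → α) (i : ι) : ℕ := #{m | v i ≤ v m}

theorem card_rankFromAbove_le_le (v : ι → α) (k : ℕ) : #{i | rankFromAbove v i ≤ k} ≤ k := by
  set S : Finset ι := {i | rankFromAbove v i ≤ k}
  rcases S.eq_empty_or_nonempty with hS | hS
  · simp [hS]
  obtain ⟨i₀, hi₀, hmin⟩ := S.exists_min_image v hS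
  calc #S ≤ rankFromAbove v i₀ := card_le_card fun j hj => by simpa using hmin j hj
    _ ≤ k := (mem_filter.mp hi₀).2

theorem rankFromAbove_comp_perm (v : ι → α) (σ : Equiv.Perm ι) (i : ι) :
    rankFromAbove (v ∘ σ) i = rankFromAbove v (σ i) := by
  simp only [rankFromAbove, Function.comp_apply, card_filter]
  exact Equiv.sum_comp σ (fun m => if v (σ i) ≤ v m then 1 else 0)

theorem rankFromAbove_zero {n : ℕ} (v : Fin (n + 1) → α) :
    rankFromAbove v 0 = 1 + #{m : Fin n | v 0 ≤ v m.succ} := by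
  simp only [rankFromAbove, card_filter, Fin.sum_univ_succ, le_refl, if_true]

theorem measurable_rankFromAbove [MeasurableSpace α] [TopologicalSpace α] [OrderClosedTopology α]
    [SecondCountableTopology α] [OpensMeasurableSpace α] (i : ι) :
    Measurable fun v : ι → α => rankFromAbove v i := by
  simp only [rankFromAbove, card_filter]
  exact Finset.measurable_sum _ fun m _ =>
    Measurable.ite (measurableSet_le (measurable_pi_apply i) (measurable_pi_apply m))
      measurable_const measurable_const

end Rank

section Exchangeable

variable {Ω ι α : Type*} [MeasurableSpace Ω] [MeasurableSpace α]

def IsExchangeable (P : Measure Ω) (X : Ω → ι → α) : Prop :=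
  ∀ σ : Equiv.Perm ι, P.map (fun ω => X ω ∘ σ) = P.map X

theorem IsExchangeable.measure_preimage_comp_perm {P : Measure Ω} {X : Ω → ι → α}
    (hexch : IsExchangeable P X) (hX : Measurable X) (σ : Equiv.Perm ι) {B : Set (ι → α)}
    (hB : MeasurableSet B) : P ((fun ω => X ω ∘ σ) ⁻¹' B) = P (X ⁻¹' B) := by
  have hXσ : Measurable fun ω => X ω ∘ σ :=
    (measurable_pi_lambda _ fun j => measurable_pi_apply (σ j)).comp hX
  rw [← Measure.map_apply hXσ hB, hexch σ, Measure.map_apply hX hB]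

variable [Fintype ι] [LinearOrder α] [TopologicalSpace α] [OrderClosedTopology α]
  [SecondCountableTopology α] [OpensMeasurableSpace α]

theorem IsExchangeable.measure_rankFromAbove_le_eq {P : Measure Ω} {X : Ω → ι → α}
    (hexch : IsExchangeable P X) (hX : Measurable X) (k : ℕ) (i j : ι) :
    P {ω | rankFromAbove (X ω) i ≤ k} = P {ω | rankFromAbove (X ω) j ≤ k} := by
  classical
  have hB : MeasurableSet {v : ι → α | rankFromAbove v j ≤ k} :=
    measurable_rankFromAbove j measurableSet_Iic
  simpa only [Set.preimage_ofPred_eq, rankFromAbove_comp_perm, Equiv.swap_apply_right] using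
    hexch.measure_preimage_comp_perm hX (Equiv.swap i j) hB

theorem sum_measure_rankFromAbove_le (P : Measure Ω) {X : Ω → ι → α} (hX : Measurable X)
    (k : ℕ) : ∑ i, P {ω | rankFromAbove (X ω) i ≤ k} ≤ k * P Set.univ := by
  have hE : ∀ i, MeasurableSet {ω | rankFromAbove (X ω) i ≤ k} := fun i =>
    (measurable_rankFromAbove i).comp hX measurableSet_Iic
  calc ∑ i, P {ω | rankFromAbove (X ω) i ≤ k}
      = ∫⁻ ω, ∑ i, {ω | rankFromAbove (X ω) i ≤ k}.indicator 1 ω ∂P := by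
        rw [lintegral_finsetSum _ fun i _ => measurable_one.indicator (hE i)]
        simp_rw [lintegral_indicator_one (hE _)]
    _ = ∫⁻ ω, (#{i | rankFromAbove (X ω) i ≤ k} : ℝ≥0∞) ∂P := by
        simp [Set.indicator_apply, Finset.sum_boole]
    _ ≤ ∫⁻ _, (k : ℝ≥0∞) ∂P :=
        lintegral_mono fun ω => Nat.cast_le.mpr (card_rankFromAbove_le_le (X ω) k)
    _ = k * P Set.univ := lintegral_const _

theorem IsExchangeable.card_mul_measure_rankFromAbove_le {P : Measure Ω} {X : Ω → ι → α}
    (hexch : IsExchangeable P X) (hX : Measurable X) (k : ℕ) (i : ι) :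
    Fintype.card ι * P {ω | rankFromAbove (X ω) i ≤ k} ≤ k * P Set.univ := by
  calc Fintype.card ι * P {ω | rankFromAbove (X ω) i ≤ k}
      = ∑ j, P {ω | rankFromAbove (X ω) j ≤ k} := by
        simp [hexch.measure_rankFromAbove_le_eq hX k _ i]
    _ ≤ k * P Set.univ := sum_measure_rankFromAbove_le P hX k

end Exchangeable

theorem pval_valid_of_exchangeable_general
    {Ω : Type*} [MeasurableSpace Ω] (P : Measure Ω) [IsProbabilityMeasure P]
    (M : ℕ) (A : Fin (M + 1) → Ω → ℝ) (hA : ∀ i, Measurable (A i))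
    (hexch : ∀ σ : Equiv.Perm (Fin (M + 1)),
      Measure.map (fun ω => fun i => A (σ i) ω) P = Measure.map (fun ω => fun i => A i ω) P)
    (α : ℝ) (hα0 : 0 ≤ α) :
    (P {ω | ((1 + (Finset.filter (fun m : Fin M => A 0 ω ≤ A m.succ ω) Finset.univ).card : ℕ) : ℝ)
        / (M + 1) ≤ α}).toReal ≤ α := by
  set X : Ω → Fin (M + 1) → ℝ := fun ω i => A i ω
  have hX : IsExchangeable P X := hexch
  set k := ⌊α * (M + 1)⌋₊
  have hM : (0 : ℝ) < M + 1 := by positivity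
  have hevent : {ω | ((1 + #{m : Fin M | A 0 ω ≤ A m.succ ω} : ℕ) : ℝ) / (M + 1) ≤ α} =
      {ω | rankFromAbove (X ω) 0 ≤ k} := by
    ext ω
    rw [Set.mem_ofPred_eq, Set.mem_ofPred_eq, rankFromAbove_zero, div_le_iff₀ hM,
      Nat.le_floor_iff (by positivity)]
  have hbound := hX.card_mul_measure_rankFromAbove_le (measurable_pi_lambda X hA) k 0
  rw [measure_univ, mul_one, Fintype.card_fin] at hbound
  have hreal : (M + 1) * (P {ω | rankFromAbove (X ω) 0 ≤ k}).toReal ≤ k := by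
    have := ENNReal.toReal_mono (by simp) hbound
    rwa [ENNReal.toReal_mul, ENNReal.toReal_natCast, ENNReal.toReal_natCast, Nat.cast_succ] at this
  rw [hevent]
  calc _ ≤ (k : ℝ) / (M + 1) := (le_div_iff₀' hM).2 hreal
    _ ≤ α := (div_le_iff₀ hM).2 (Nat.floor_le (by positivity))

/-- Validity of the exchangeability-based p-value: if `A 0, ..., A M` are exchangeable
real random variables and `pval = (1 + #{m ≥ 1 : A m ≥ A 0})/(M+1)`, then
`P(pval ≤ α) ≤ α` for all `α ∈ [0,1]`. -/
theorem pval_valid_of_exchangeable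
    {Ω : Type*} [MeasurableSpace Ω] (P : Measure Ω) [IsProbabilityMeasure P]
    (M : ℕ) (A : Fin (M + 1) → Ω → ℝ) (hA : ∀ i, Measurable (A i))
    (hexch : ∀ σ : Equiv.Perm (Fin (M + 1)),
      Measure.map (fun ω => fun i => A (σ i) ω) P = Measure.map (fun ω => fun i => A i ω) P)
    (α : ℝ) (hα0 : 0 ≤ α) (hα1 : α ≤ 1) :
    (P {ω | ((1 + (Finset.filter (fun m : Fin M => A 0 ω ≤ A m.succ ω) Finset.univ).card : ℕ) : ℝ)
        / (M + 1) ≤ α}).toReal ≤ α :=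
  pval_valid_of_exchangeable_general P M A hA hexch α hα0
end

section
/- Let P and Q be two probability distributions on a measurable space for random vectors (A_0, A_1, ..., A_M), fix any measurable function T from the component space to the reals, and define pval(a_0,...,a_M) = (1/(M+1)) * (1 + #{m : T(a_m) >= T(a_0)}). If Q is exchangeable (invariant under permutations of the M+1 coordinates), then under P, P(pval <= alpha) <= alpha + d_TV(P, Q) for every alpha in [0,1]. -/
open MeasureTheory
open scoped ENNReal

/-- Total variation distance between two measures:
`d_TV(P,Q) = sup over measurable sets A of |P(A) - Q(A)|`. -/
noncomputable def tvDist {Ω : Type*} [MeasurableSpace Ω] (P Q : Measure Ω) : ℝ :=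
  ⨆ A : {s : Set Ω // MeasurableSet s}, |(P A.1).toReal - (Q A.1).toReal|

set_option linter.unusedSectionVars false
set_option linter.unusedVariables false

section aux

variable {𝓧 : Type*} [MeasurableSpace 𝓧] (M : ℕ) (T : 𝓧 → ℝ)

/-- number of coordinates whose score is at least that of coordinate `i` -/
noncomputable def Ncount (a : Fin (M + 1) → 𝓧) (i : Fin (M + 1)) : ℕ :=
  (Finset.univ.filter (fun k => T (a i) ≤ T (a k))).card

lemma Ncount_comp_perm (σ : Equiv.Perm (Fin (M + 1))) (a : Fin (M + 1) → 𝓧)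
    (i : Fin (M + 1)) : Ncount M T (a ∘ σ) i = Ncount M T a (σ i) := by
  unfold Ncount
  have : (Finset.univ.filter (fun k => T (a (σ i)) ≤ T (a (σ k))))
      = (Finset.univ.filter (fun k => T (a (σ i)) ≤ T (a k))).map σ.symm.toEmbedding := by
    ext k
    simp [Finset.mem_map_equiv]
  simp only [Function.comp_apply]
  rw [this, Finset.card_map]

lemma measurable_Ncount (hT : Measurable T) (i : Fin (M + 1)) :
    Measurable (fun a : Fin (M + 1) → 𝓧 => (Ncount M T a i : ℝ)) := by
  have : (fun a : Fin (M + 1) → 𝓧 => (Ncount M T a i : ℝ))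
      = fun a => ∑ k : Fin (M + 1), if T (a i) ≤ T (a k) then (1 : ℝ) else 0 := by
    funext a
    unfold Ncount
    rw [Finset.card_filter]
    push_cast
    rfl
  rw [this]
  apply Finset.measurable_sum
  intro k _
  exact Measurable.ite (measurableSet_le (hT.comp (measurable_pi_apply i))
    (hT.comp (measurable_pi_apply k))) measurable_const measurable_const

/-- deterministic core: at most `α(M+1)` indices have small rank count -/
lemma card_small_le (α : ℝ) (hα0 : 0 ≤ α) (a : Fin (M + 1) → 𝓧) :
    ((Finset.univ.filter (fun i : Fin (M + 1) =>
      (Ncount M T a i : ℝ) ≤ α * (M + 1))).card : ℝ) ≤ α * (M + 1) := by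
  set S := Finset.univ.filter (fun i : Fin (M + 1) =>
      (Ncount M T a i : ℝ) ≤ α * (M + 1)) with hS
  rcases S.eq_empty_or_nonempty with h | h
  · rw [h]
    simp
    positivity
  · obtain ⟨i, hiS, hmin⟩ := S.exists_min_image (fun j => T (a j)) h
    have hsub : S ⊆ Finset.univ.filter (fun k => T (a i) ≤ T (a k)) := by
      intro j hj
      simp only [Finset.mem_filter, Finset.mem_univ, true_and]
      exact hmin j hj
    have h1 : (S.card : ℝ) ≤ (Ncount M T a i : ℝ) := by
      exact_mod_cast Finset.card_le_card hsub
    have h2 : (Ncount M T a i : ℝ) ≤ α * (M + 1) := by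
      rw [hS] at hiS
      simpa using (Finset.mem_filter.mp hiS).2
    linarith

end aux

/-- If `Q` is exchangeable, then under `P` the p-value
`pval(a) = (1 + #{m : T(a m) ≥ T(a 0)})/(M+1)` satisfies
`P(pval ≤ α) ≤ α + d_TV(P,Q)` for all `α ∈ [0,1]`. -/
theorem pval_valid_of_close_to_exchangeable
    {𝓧 : Type*} [MeasurableSpace 𝓧] (M : ℕ)
    (P Q : Measure (Fin (M + 1) → 𝓧)) [IsProbabilityMeasure P] [IsProbabilityMeasure Q]
    (T : 𝓧 → ℝ) (hT : Measurable T)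
    (hexch : ∀ σ : Equiv.Perm (Fin (M + 1)), Measure.map (fun a => a ∘ σ) Q = Q)
    (α : ℝ) (hα0 : 0 ≤ α) (hα1 : α ≤ 1) :
    (P {a | ((1 + (Finset.filter (fun m : Fin M => T (a 0) ≤ T (a m.succ)) Finset.univ).card : ℕ) : ℝ)
        / (M + 1) ≤ α}).toReal ≤ α + tvDist P Q := by
  set B : Fin (M + 1) → Set (Fin (M + 1) → 𝓧) :=
    fun i => {a | (Ncount M T a i : ℝ) ≤ α * (M + 1)} with hBdef
  have hBmeas : ∀ i, MeasurableSet (B i) := fun i =>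
    measurableSet_le (measurable_Ncount M T hT i) measurable_const
  have hcount : ∀ a : Fin (M + 1) → 𝓧,
      (1 + (Finset.filter (fun m : Fin M => T (a 0) ≤ T (a m.succ)) Finset.univ).card)
        = Ncount M T a 0 := by
    intro a
    unfold Ncount
    rw [Finset.card_filter, Finset.card_filter, Fin.sum_univ_succ]
    simp
  have hBeq : {a : Fin (M + 1) → 𝓧 |
      ((1 + (Finset.filter (fun m : Fin M => T (a 0) ≤ T (a m.succ)) Finset.univ).card : ℕ) : ℝ)
        / (M + 1) ≤ α} = B 0 := by
    ext a
    simp only [hBdef, Set.mem_setOf_eq]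
    rw [hcount a, div_le_iff₀ (by positivity)]
  rw [hBeq]
  -- Q (B i) = Q (B 0) by exchangeability
  have hQeq : ∀ i, Q (B i) = Q (B 0) := by
    intro i
    have hσ := hexch (Equiv.swap 0 i)
    have hm : Measurable (fun a : Fin (M + 1) → 𝓧 => a ∘ (Equiv.swap 0 i)) :=
      measurable_pi_lambda _ (fun j => measurable_pi_apply _)
    calc Q (B i) = (Measure.map (fun a => a ∘ (Equiv.swap 0 i)) Q) (B 0) := by
            rw [Measure.map_apply hm (hBmeas 0)]
            congr 1
            ext a
            simp only [Set.mem_preimage, hBdef, Set.mem_setOf_eq]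
            rw [Ncount_comp_perm]
            simp
      _ = Q (B 0) := by rw [hσ]
  -- sum over i
  have hsum : ∑ i : Fin (M + 1), Q (B i) ≤ ENNReal.ofReal (α * (M + 1)) := by
    have h1 : ∀ i : Fin (M + 1), Q (B i)
        = ∫⁻ a, (B i).indicator (1 : (Fin (M + 1) → 𝓧) → ℝ≥0∞) a ∂Q :=
      fun i => (lintegral_indicator_one (hBmeas i)).symm
    calc ∑ i : Fin (M + 1), Q (B i)
        = ∫⁻ a, (∑ i : Fin (M + 1),
            (B i).indicator (1 : (Fin (M + 1) → 𝓧) → ℝ≥0∞) a) ∂Q := by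
          rw [lintegral_finset_sum]
          · exact Finset.sum_congr rfl (fun i _ => h1 i)
          · exact fun i _ => measurable_one.indicator (hBmeas i)
      _ ≤ ∫⁻ _, ENNReal.ofReal (α * (M + 1)) ∂Q := by
          apply lintegral_mono
          intro a
          have key : ∑ i : Fin (M + 1), (B i).indicator (1 : (Fin (M + 1) → 𝓧) → ℝ≥0∞) a
              = ((Finset.univ.filter (fun i : Fin (M + 1) =>
                  (Ncount M T a i : ℝ) ≤ α * (M + 1))).card : ℕ) := by
            rw [Finset.card_filter]
            push_cast
            apply Finset.sum_congr rfl
            intro i _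
            by_cases h : a ∈ B i
            · rw [Set.indicator_of_mem h]
              simp only [hBdef, Set.mem_setOf_eq] at h
              simp [h]
            · rw [Set.indicator_of_notMem h]
              simp only [hBdef, Set.mem_setOf_eq] at h
              rw [if_neg h]
          dsimp only
          rw [key]
          have hb := card_small_le M T α hα0 a
          calc ((Finset.univ.filter (fun i : Fin (M + 1) =>
                  (Ncount M T a i : ℝ) ≤ α * (M + 1))).card : ℝ≥0∞)
              = ENNReal.ofReal ((Finset.univ.filter (fun i : Fin (M + 1) =>
                  (Ncount M T a i : ℝ) ≤ α * (M + 1))).card : ℝ) := by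
                rw [ENNReal.ofReal_natCast]
            _ ≤ ENNReal.ofReal (α * (M + 1)) := ENNReal.ofReal_le_ofReal hb
      _ = ENNReal.ofReal (α * (M + 1)) := by simp
  -- hence Q (B 0) ≤ ofReal α
  have hQB : Q (B 0) ≤ ENNReal.ofReal α := by
    have hsc : ∑ i : Fin (M + 1), Q (B i) = ((M + 1 : ℕ) : ℝ≥0∞) * Q (B 0) := by
      rw [Finset.sum_congr rfl fun i _ => hQeq i, Finset.sum_const, Finset.card_univ,
        Fintype.card_fin, nsmul_eq_mul]
    have h2 : ((M + 1 : ℕ) : ℝ≥0∞) * Q (B 0) ≤ ((M + 1 : ℕ) : ℝ≥0∞) * ENNReal.ofReal α := by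
      rw [← hsc]
      refine hsum.trans_eq ?_
      rw [show α * ((M : ℝ) + 1) = ((M + 1 : ℕ) : ℝ) * α by push_cast; ring,
        ENNReal.ofReal_mul (by positivity), ENNReal.ofReal_natCast]
    exact (ENNReal.mul_le_mul_iff_right (by simp) (by simp)).mp h2
  have hQBr : (Q (B 0)).toReal ≤ α := by
    calc (Q (B 0)).toReal ≤ (ENNReal.ofReal α).toReal :=
          ENNReal.toReal_mono ENNReal.ofReal_ne_top hQB
      _ = α := ENNReal.toReal_ofReal hα0
  -- TV distance step
  have htv : (P (B 0)).toReal - (Q (B 0)).toReal ≤ tvDist P Q := by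
    have hbdd : BddAbove (Set.range (fun A : {s : Set (Fin (M + 1) → 𝓧) // MeasurableSet s} =>
        |(P A.1).toReal - (Q A.1).toReal|)) := by
      refine ⟨1, ?_⟩
      rintro x ⟨A, rfl⟩
      have h1 : (P A.1).toReal ≤ 1 :=
        le_trans (ENNReal.toReal_mono ENNReal.one_ne_top (prob_le_one (μ := P) (s := A.1)))
          (by simp)
      have h2 : (Q A.1).toReal ≤ 1 :=
        le_trans (ENNReal.toReal_mono ENNReal.one_ne_top (prob_le_one (μ := Q) (s := A.1)))
          (by simp)
      have h3 : 0 ≤ (P A.1).toReal := ENNReal.toReal_nonneg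
      have h4 : 0 ≤ (Q A.1).toReal := ENNReal.toReal_nonneg
      rw [abs_sub_le_iff]
      constructor <;> linarith
    have hle := le_ciSup hbdd (⟨B 0, hBmeas 0⟩ : {s : Set (Fin (M + 1) → 𝓧) // MeasurableSet s})
    calc (P (B 0)).toReal - (Q (B 0)).toReal ≤ |(P (B 0)).toReal - (Q (B 0)).toReal| :=
          le_abs_self _
      _ ≤ tvDist P Q := hle
  linarith
end

section
/- Let K be a reversible Markov transition kernel on a finite state space with stationary distribution pi, let X_0 ~ pi, and let L, M be positive integers. Generate a 'hub' X_star by running the chain L steps from X_0; then, conditionally independently given X_star, generate X_1, ..., X_M by running the chain L steps from X_star for each. Then the random vector (X_0, X_1, ..., X_M) is exchangeable. -/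
private lemma rev_pow {S : Type*} [Fintype S] [DecidableEq S]
    (π : S → ℝ) (K : Matrix S S ℝ)
    (hrev : ∀ s t, π s * K s t = π t * K t s) :
    ∀ (n : ℕ) (s t : S), π s * (K ^ n) s t = π t * (K ^ n) t s := by
  intro n
  induction n with
  | zero =>
    intro s t
    simp only [pow_zero, Matrix.one_apply]
    by_cases h : s = t <;> simp [h, eq_comm]
  | succ n ih =>
    intro s t
    have h1 : (K ^ (n + 1)) s t = ∑ u, (K ^ n) s u * K u t := by
      rw [pow_succ]; rfl
    have h2 : (K ^ (n + 1)) t s = ∑ u, K t u * (K ^ n) u s := by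
      rw [pow_succ']; rfl
    rw [h1, h2, Finset.mul_sum, Finset.mul_sum]
    apply Finset.sum_congr rfl
    intro u _
    calc π s * ((K ^ n) s u * K u t) = (π s * (K ^ n) s u) * K u t := by ring
      _ = (π u * (K ^ n) u s) * K u t := by rw [ih]
      _ = (π u * K u t) * (K ^ n) u s := by ring
      _ = (π t * K t u) * (K ^ n) u s := by rw [hrev]
      _ = π t * (K t u * (K ^ n) u s) := by ring

/-- Hub-and-spoke exchangeability: for a reversible Markov transition matrix `K` with
stationary distribution `π` on a finite state space, starting the chain at `X₀ ~ π`,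
running `L` steps to a hub `X*`, and then running `M` conditionally independent
`L`-step spokes `X₁, ..., X_M` from `X*`, the joint pmf of `(X₀, X₁, ..., X_M)` is
invariant under every permutation of the coordinates. -/
theorem hub_and_spoke_exchangeable
    {S : Type*} [Fintype S] [DecidableEq S]
    (π : S → ℝ) (K : Matrix S S ℝ)
    (hπ0 : ∀ s, 0 ≤ π s) (hπ1 : ∑ s, π s = 1)
    (hK0 : ∀ s t, 0 ≤ K s t) (hK1 : ∀ s, ∑ t, K s t = 1)
    (hrev : ∀ s t, π s * K s t = π t * K t s)
    (L M : ℕ) (hL : 0 < L) (hM : 0 < M)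
    (σ : Equiv.Perm (Fin (M + 1))) (x : Fin (M + 1) → S) :
    (∑ xstar, π (x (σ 0)) * (K ^ L) (x (σ 0)) xstar
        * ∏ m : Fin M, (K ^ L) xstar (x (σ m.succ)))
      = ∑ xstar, π (x 0) * (K ^ L) (x 0) xstar * ∏ m : Fin M, (K ^ L) xstar (x m.succ) := by
  have hrevL := rev_pow π K hrev L
  have key : ∀ (y : Fin (M + 1) → S),
      (∑ s, π (y 0) * (K ^ L) (y 0) s * ∏ m : Fin M, (K ^ L) s (y m.succ))
        = ∑ s, π s * ∏ i : Fin (M + 1), (K ^ L) s (y i) := by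
    intro y
    apply Finset.sum_congr rfl
    intro s _
    rw [hrevL, Fin.prod_univ_succ]
    ring
  have h1 := key (fun i => x (σ i))
  have h2 := key x
  rw [h1, h2]
  apply Finset.sum_congr rfl
  intro s _
  rw [Equiv.prod_comp σ (fun i => (K ^ L) s (x i))]
end
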